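/- Safety of R-Rule 6 (resolution with an (i,1)-literal): let F be a multiset of clauses over Boolean variables in which neither z nor ¬z occurs, and let (z ∨ C_1), ..., (z ∨ C_i), (¬z ∨ y ∨ C) be clauses where z occurs positively exactly i ≥ 1 times and negatively exactly once in the full formula F_1 = F ∧ (z∨C_1) ∧ ... ∧ (z∨C_i) ∧ (¬z∨y∨C), and the literal ¬y occurs exactly once in F_1 (i.e., y is a (j,1)-literal), with y ≠ z and y ≠ ¬z. Then maxsat(F_1) ≥ k if and only if maxsat(F ∧ (y∨C∨C_1) ∧ ... ∧ (y∨C∨C_i)) ≥ k - 1. -/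
import Mathlib


open Classical

/-- Variables are natural numbers. -/
abbrev Var := ℕ

/-- A literal is a variable together with a sign (`true` = positive). -/
abbrev Lit := Var × Bool

/-- Negation of a literal. -/
def Lit.neg (l : Lit) : Lit := (l.1, !l.2)

/-- A clause is a finite set of literals. -/
abbrev Clause := Finset Lit

/-- A literal is satisfied by an assignment. -/
def litSat (σ : Var → Bool) (l : Lit) : Prop := σ l.1 = l.2

/-- A clause is satisfied if some literal in it is satisfied. -/
def clauseSat (σ : Var → Bool) (C : Clause) : Prop := ∃ l ∈ C, litSat σ l

/-- Number of clauses of the multiset `G` satisfied by the assignment `σ`. -/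
noncomputable def satCount (σ : Var → Bool) (G : Multiset Clause) : ℕ :=
  Multiset.card (G.filter fun C => clauseSat σ C)

/-- Maximum number of clauses of `G` satisfiable by an assignment. -/
noncomputable def maxsat (G : Multiset Clause) : ℕ :=
  sSup (Set.range fun σ => satCount σ G)

/-- Number of clauses of `G` that contain the literal `l`. -/
noncomputable def occCount (l : Lit) (G : Multiset Clause) : ℕ :=
  Multiset.card (G.filter fun C => l ∈ C)

/-- The variable `v` occurs (positively or negatively) in the formula `G`. -/
def varOccurs (v : Var) (G : Multiset Clause) : Prop :=
  ∃ C ∈ G, ∃ l ∈ C, l.1 = v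

lemma clauseSat_insert (σ : Var → Bool) (l : Lit) (C : Clause) :
    clauseSat σ (insert l C) ↔ litSat σ l ∨ clauseSat σ C := by
  simp [clauseSat, Finset.mem_insert, or_and_right, exists_or]

lemma clauseSat_union (σ : Var → Bool) (C D : Clause) :
    clauseSat σ (C ∪ D) ↔ clauseSat σ C ∨ clauseSat σ D := by
  simp [clauseSat, Finset.mem_union, or_and_right, exists_or]

lemma satCount_eq_countP (σ : Var → Bool) (G : Multiset Clause) :
    satCount σ G = G.countP (clauseSat σ) := by
  simp [satCount, Multiset.countP_eq_card_filter]

lemma satCount_add (σ : Var → Bool) (A B : Multiset Clause) :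
    satCount σ (A + B) = satCount σ A + satCount σ B := by
  simp [satCount, Multiset.filter_add]

lemma satCount_cons (σ : Var → Bool) (c : Clause) (G : Multiset Clause) :
    satCount σ (c ::ₘ G) = (if clauseSat σ c then 1 else 0) + satCount σ G := by
  simp [satCount, Multiset.filter_cons]
  split <;> simp [add_comm]

lemma occCount_add (l : Lit) (A B : Multiset Clause) :
    occCount l (A + B) = occCount l A + occCount l B := by
  simp [occCount, Multiset.filter_add]

lemma occCount_cons (l : Lit) (c : Clause) (G : Multiset Clause) :
    occCount l (c ::ₘ G) = (if l ∈ c then 1 else 0) + occCount l G := by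
  simp [occCount, Multiset.filter_cons]
  split <;> simp [add_comm]

lemma satCount_le_card (σ : Var → Bool) (G : Multiset Clause) :
    satCount σ G ≤ Multiset.card G := by
  simpa [satCount] using Multiset.card_le_card (Multiset.filter_le _ G)

lemma bddAbove_range_satCount (G : Multiset Clause) :
    BddAbove (Set.range fun σ => satCount σ G) := by
  refine ⟨Multiset.card G, ?_⟩
  rintro x ⟨σ, rfl⟩
  exact satCount_le_card σ G

lemma le_maxsat (σ : Var → Bool) (G : Multiset Clause) :
    satCount σ G ≤ maxsat G :=
  le_csSup (bddAbove_range_satCount G) ⟨σ, rfl⟩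

lemma exists_maxsat (G : Multiset Clause) : ∃ σ, satCount σ G = maxsat G := by
  have h := Nat.sSup_mem (s := Set.range fun σ => satCount σ G)
    ⟨satCount (fun _ => true) G, ⟨_, rfl⟩⟩ (bddAbove_range_satCount G)
  exact h

lemma litSat_update_ne (σ : Var → Bool) (v : Var) (b : Bool) (l : Lit) (h : l.1 ≠ v) :
    litSat (Function.update σ v b) l ↔ litSat σ l := by
  simp [litSat, Function.update_of_ne h]

lemma clauseSat_update_ne (σ : Var → Bool) (v : Var) (b : Bool) (C : Clause)
    (h : ∀ l ∈ C, l.1 ≠ v) :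
    clauseSat (Function.update σ v b) C ↔ clauseSat σ C := by
  unfold clauseSat
  constructor <;> rintro ⟨l, hl, hsat⟩ <;> exact ⟨l, hl,
    by rwa [litSat_update_ne σ v b l (h l hl)] at *⟩

lemma satCount_update_ne (σ : Var → Bool) (v : Var) (b : Bool) (G : Multiset Clause)
    (h : ¬ varOccurs v G) :
    satCount (Function.update σ v b) G = satCount σ G := by
  unfold satCount
  congr 1
  apply Multiset.filter_congr
  intro Cl hCl
  have : ∀ l ∈ Cl, l.1 ≠ v := fun l hl hv => h ⟨Cl, hCl, l, hl, hv⟩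
  simp [clauseSat_update_ne σ v b Cl this]

lemma countP_le_countP_add_countP (p q r : Clause → Prop)
    [DecidablePred p] [DecidablePred q] [DecidablePred r] (s : Multiset Clause)
    (h : ∀ a ∈ s, p a → q a ∨ r a) :
    s.countP p ≤ s.countP q + s.countP r := by
  induction s using Multiset.induction with
  | empty => simp
  | cons a s ih =>
    simp only [Multiset.countP_cons]
    have ih' := ih (fun b hb => h b (Multiset.mem_cons_of_mem hb))
    by_cases hp : p a
    · rcases h a (Multiset.mem_cons_self a s) hp with hq | hr
      · simp [hp, hq]; omega
      · simp [hp, hr]; omega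
    · simp [hp]; omega

lemma countP_mono (p q : Clause → Prop)
    [DecidablePred p] [DecidablePred q] (s : Multiset Clause)
    (h : ∀ a ∈ s, p a → q a) : s.countP p ≤ s.countP q := by
  induction s using Multiset.induction with
  | empty => simp
  | cons a s ih =>
    simp only [Multiset.countP_cons]
    have ih' := ih (fun b hb => h b (Multiset.mem_cons_of_mem hb))
    by_cases hp : p a
    · have hq := h a (Multiset.mem_cons_self a s) hp
      simp [hp, hq]; omega
    · simp [hp]; omega

/-- Safety of R-Rule 6 (resolution with an `(i,1)`-literal): with
`F₁ = F ∧ (z∨C₁) ∧ ⋯ ∧ (z∨Cᵢ) ∧ (¬z∨y∨C)`, where `z` occurs `i ≥ 1` times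
positively and once negatively, and `¬y` occurs exactly once in `F₁`,
`maxsat F₁ ≥ k` iff `maxsat(F ∧ (y∨C∨C₁) ∧ ⋯ ∧ (y∨C∨Cᵢ)) ≥ k - 1`. -/
theorem rrule6_resolution_safe (F : Multiset Clause) (z y : Lit) (C : Clause)
    (i : ℕ) (hi : 1 ≤ i) (Cs : Multiset Clause) (hCs : Multiset.card Cs = i)
    (hzF : ¬ varOccurs z.1 F)
    (hzCs : ∀ D ∈ Cs, ∀ l ∈ D, l.1 ≠ z.1)
    (hzC : ∀ l ∈ C, l.1 ≠ z.1)
    (hyz : y ≠ z ∧ y ≠ z.neg)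
    (hynegOnce :
      occCount y.neg
        (insert z.neg (insert y C) ::ₘ (Cs.map fun D => insert z D) + F) = 1) :
    ∀ k : ℕ,
      k ≤ maxsat (insert z.neg (insert y C) ::ₘ (Cs.map fun D => insert z D) + F) ↔
      k - 1 ≤ maxsat ((Cs.map fun D => insert y (C ∪ D)) + F) := by
  classical
  have hyz1 : y.1 ≠ z.1 := by
    intro h
    rcases hyz with ⟨h1, h2⟩
    have : y.2 = z.2 ∨ y.2 = !z.2 := by cases y.2 <;> cases hz2 : z.2 <;> simp
    rcases this with h3 | h3
    · exact h1 (Prod.ext h h3)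
    · exact h2 (Prod.ext h h3)
  set F1 := insert z.neg (insert y C) ::ₘ (Cs.map fun D => insert z D) + F with hF1def
  set F2 := (Cs.map fun D => insert y (C ∪ D)) + F with hF2def
  have hocc : occCount y.neg F ≤ 1 := by
    rw [hF1def, occCount_add, occCount_cons] at hynegOnce
    omega
  have hzneg : ∀ σ : Var → Bool, litSat σ z.neg ↔ ¬ litSat σ z := by
    intro σ
    simp [litSat, Lit.neg, Bool.eq_not_iff]
  -- counting lemmas for the mapped clauses
  have mapZa : ∀ σ : Var → Bool, litSat σ z →
      satCount σ (Cs.map fun D => insert z D) = i := by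
    intro σ hz
    rw [satCount_eq_countP, Multiset.countP_map, ← Multiset.countP_eq_card_filter,
      ← hCs]
    rw [Multiset.countP_eq_card]
    intro D _
    exact (clauseSat_insert σ z D).2 (Or.inl hz)
  have mapZb : ∀ σ : Var → Bool, ¬ litSat σ z →
      satCount σ (Cs.map fun D => insert z D) = Cs.countP (clauseSat σ) := by
    intro σ hz
    rw [satCount_eq_countP, Multiset.countP_map, ← Multiset.countP_eq_card_filter]
    refine Multiset.countP_congr rfl ?_
    intro D _
    exact propext (by simp [clauseSat_insert, hz])
  have mapYa : ∀ σ : Var → Bool, (litSat σ y ∨ clauseSat σ C) →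
      satCount σ (Cs.map fun D => insert y (C ∪ D)) = i := by
    intro σ hyC
    rw [satCount_eq_countP, Multiset.countP_map, ← Multiset.countP_eq_card_filter,
      ← hCs]
    rw [Multiset.countP_eq_card]
    intro D _
    rw [clauseSat_insert, clauseSat_union]
    tauto
  have mapYb : ∀ σ : Var → Bool, ¬ (litSat σ y ∨ clauseSat σ C) →
      satCount σ (Cs.map fun D => insert y (C ∪ D)) = Cs.countP (clauseSat σ) := by
    intro σ hyC
    rw [satCount_eq_countP, Multiset.countP_map, ← Multiset.countP_eq_card_filter]
    refine Multiset.countP_congr rfl ?_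
    intro D _
    refine propext ?_
    rw [clauseSat_insert, clauseSat_union]
    tauto
  -- satCount of F1 split
  have split1 : ∀ σ : Var → Bool, satCount σ F1 =
      (if clauseSat σ (insert z.neg (insert y C)) then 1 else 0)
      + satCount σ (Cs.map fun D => insert z D) + satCount σ F := by
    intro σ
    rw [hF1def, satCount_add, satCount_cons]
  have headIff : ∀ σ : Var → Bool, clauseSat σ (insert z.neg (insert y C)) ↔
      (¬ litSat σ z) ∨ litSat σ y ∨ clauseSat σ C := by
    intro σ
    rw [clauseSat_insert, clauseSat_insert, hzneg σ]
  have split2 : ∀ σ : Var → Bool, satCount σ F2 =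
      satCount σ (Cs.map fun D => insert y (C ∪ D)) + satCount σ F := by
    intro σ
    rw [hF2def, satCount_add]
  have htle : ∀ σ : Var → Bool, Cs.countP (clauseSat σ) ≤ i := by
    intro σ
    rw [← hCs]
    exact Multiset.countP_le_card _ _
  -- invariance under updating z
  have hinv : ∀ (σ : Var → Bool) (b : Bool),
      (litSat (Function.update σ z.1 b) y ↔ litSat σ y) ∧
      (clauseSat (Function.update σ z.1 b) C ↔ clauseSat σ C) ∧
      satCount (Function.update σ z.1 b) F = satCount σ F ∧
      Cs.countP (clauseSat (Function.update σ z.1 b)) = Cs.countP (clauseSat σ) := by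
    intro σ b
    refine ⟨litSat_update_ne σ z.1 b y hyz1, clauseSat_update_ne σ z.1 b C hzC,
      satCount_update_ne σ z.1 b F hzF, ?_⟩
    refine Multiset.countP_congr rfl ?_
    intro D hD
    exact propext (clauseSat_update_ne σ z.1 b D (hzCs D hD))
  have hupz : ∀ (σ : Var → Bool) (b : Bool),
      litSat (Function.update σ z.1 b) z ↔ b = z.2 := by
    intro σ b
    simp [litSat, Function.update_self]
  suffices hM : maxsat F1 = maxsat F2 + 1 by
    intro k; rw [hM]; omega
  apply le_antisymm
  · -- maxsat F1 ≤ maxsat F2 + 1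
    obtain ⟨σ, hσ⟩ := exists_maxsat F1
    rw [← hσ]
    by_cases hz : litSat σ z
    · by_cases hyC : litSat σ y ∨ clauseSat σ C
      · have e1 : satCount σ F1 = 1 + i + satCount σ F := by
          rw [split1 σ, mapZa σ hz]
          have : clauseSat σ (insert z.neg (insert y C)) := (headIff σ).2 (Or.inr hyC)
          simp [this]
        have e2 : satCount σ F2 = i + satCount σ F := by
          rw [split2 σ, mapYa σ hyC]
        have := le_maxsat σ F2
        omega
      · -- flip y to true
        set σ' := Function.update σ y.1 y.2 with hσ'def
        have hy' : litSat σ' y := by simp [hσ'def, litSat, Function.update_self]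
        have flip : satCount σ F ≤ satCount σ' F + occCount y.neg F := by
          rw [satCount_eq_countP, satCount_eq_countP, occCount,
            ← Multiset.countP_eq_card_filter]
          apply countP_le_countP_add_countP
          intro Cl _ hCl
          by_cases h : clauseSat σ' Cl
          · exact Or.inl h
          · right
            obtain ⟨l, hl, hsat⟩ := hCl
            have h1 : l.1 = y.1 := by
              by_contra hne
              exact h ⟨l, hl, (litSat_update_ne σ y.1 y.2 l hne).2 hsat⟩
            have h2 : l.2 = !y.2 := by
              by_contra hne
              have hl2 : l.2 = y.2 := by
                cases hb : l.2 <;> cases hb2 : y.2 <;> simp_all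
              exact h ⟨l, hl, by simp [hσ'def, litSat, h1, Function.update_self, hl2]⟩
            have : l = y.neg := Prod.ext h1 h2
            rwa [← this]
        have e1 : satCount σ F1 = i + satCount σ F := by
          rw [split1 σ, mapZa σ hz]
          have : ¬ clauseSat σ (insert z.neg (insert y C)) := by
            rw [headIff σ]
            push_neg
            exact ⟨hz, fun hy => hyC (Or.inl hy), fun hC => hyC (Or.inr hC)⟩
          simp [this]
        have e2 : satCount σ' F2 = i + satCount σ' F := by
          rw [split2 σ', mapYa σ' (Or.inl hy')]
        have := le_maxsat σ' F2
        omega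
    · -- z false : head clause satisfied by ¬z
      have e1 : satCount σ F1 = 1 + Cs.countP (clauseSat σ) + satCount σ F := by
        rw [split1 σ, mapZb σ hz]
        have : clauseSat σ (insert z.neg (insert y C)) := (headIff σ).2 (Or.inl hz)
        simp [this]
      have e2 : Cs.countP (clauseSat σ) + satCount σ F ≤ satCount σ F2 := by
        rw [split2 σ]
        by_cases hyC : litSat σ y ∨ clauseSat σ C
        · rw [mapYa σ hyC]
          have := htle σ
          omega
        · rw [mapYb σ hyC]
      have := le_maxsat σ F2
      omega
  · -- maxsat F2 + 1 ≤ maxsat F1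
    obtain ⟨σ, hσ⟩ := exists_maxsat F2
    rw [← hσ]
    by_cases hyC : litSat σ y ∨ clauseSat σ C
    · set σ' := Function.update σ z.1 z.2 with hσ'def
      obtain ⟨iy, iC, iF, iCs⟩ := hinv σ z.2
      have hz' : litSat σ' z := (hupz σ z.2).2 rfl
      have hyC' : litSat σ' y ∨ clauseSat σ' C := by
        rcases hyC with h | h
        · exact Or.inl (iy.2 h)
        · exact Or.inr (iC.2 h)
      have e1 : satCount σ' F1 = 1 + i + satCount σ F := by
        rw [split1 σ', mapZa σ' hz', iF]
        have : clauseSat σ' (insert z.neg (insert y C)) := (headIff σ').2 (Or.inr hyC')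
        simp [this]
      have e2 : satCount σ F2 = i + satCount σ F := by
        rw [split2 σ, mapYa σ hyC]
      have := le_maxsat σ' F1
      omega
    · have e2 : satCount σ F2 = Cs.countP (clauseSat σ) + satCount σ F := by
        rw [split2 σ, mapYb σ hyC]
      by_cases ht : Cs.countP (clauseSat σ) = i
      · -- set z false
        set σ' := Function.update σ z.1 (!z.2) with hσ'def
        obtain ⟨iy, iC, iF, iCs⟩ := hinv σ (!z.2)
        have hz' : ¬ litSat σ' z := by
          rw [hupz σ (!z.2)]
          cases z.2 <;> simp
        have e1 : satCount σ' F1 = 1 + Cs.countP (clauseSat σ) + satCount σ F := by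
          rw [split1 σ', mapZb σ' hz', iF, iCs]
          have : clauseSat σ' (insert z.neg (insert y C)) := (headIff σ').2 (Or.inl hz')
          simp [this]
        have := le_maxsat σ' F1
        omega
      · -- set z true
        have htlt : Cs.countP (clauseSat σ) < i := lt_of_le_of_ne (htle σ) ht
        set σ' := Function.update σ z.1 z.2 with hσ'def
        obtain ⟨iy, iC, iF, iCs⟩ := hinv σ z.2
        have hz' : litSat σ' z := (hupz σ z.2).2 rfl
        have e1 : satCount σ' F1 ≥ i + satCount σ F := by
          rw [split1 σ', mapZa σ' hz', iF]
          split <;> omega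
        have := le_maxsat σ' F1
        omega
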